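/- For all r, s ∈ ℕ with r, s ≥ 1 and every x ∈ ℚ, the formal power series identity (2/(t+2))^s (log(1+t)/t)^r (1+t)^x = Σ_{n≥0} (Σ_{m=0}^{n} BE_m^{(r,s)}(x) · S_1(n,m)) t^n/n! holds, where BE_m^{(r,s)}(x) are the Bernoulli–Euler mixed-type polynomials of order (r,s) and S_1(n,m) are the signed Stirling numbers of the first kind; that is, substituting log(1+t) for t in the generating function of the BE polynomials yields the stated series. -/

import Mathlib

/-!
Substituting `log(1+t)` for `t` is a ring endomorphism of `ℚ⟦t⟧` (Mathlib's `PowerSeries.subst`,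
which agrees with the truncated composition `psComp`), so it may be applied to both sides of the
defining identity of the `BE` polynomials. It sends `t` to `log(1+t)`, `e^{xt}` to `(1+t)^x`, the
exponential generating function of `BE` to the stated series (expand `log(1+t)^m` by Stirling
numbers), and `e^t` to `1+t`: `F = exp(log(1+t))` solves `(1+t) F' = F` with `F(0) = 1`, so
`F / (1+t)` has derivative zero.
-/

/-- `log(1+t) = ∑_{n ≥ 1} (-1)^{n+1} t^n / n` as a formal power series over `ℚ`. -/
noncomputable def logOneAdd : PowerSeries ℚ :=
  PowerSeries.mk fun n => if n = 0 then 0 else (-1 : ℚ) ^ (n + 1) / n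

/-- `e^{xt} = ∑_{n ≥ 0} x^n t^n / n!` as a formal power series over `ℚ`. -/
noncomputable def expMul (x : ℚ) : PowerSeries ℚ :=
  PowerSeries.mk fun n => x ^ n / (n.factorial : ℚ)

/-- Formal composition `f(g(t))` of power series, intended for `g` with zero
constant term (then `coeff n (g^m) = 0` for `m > n`, so the sum below is the
full composition). -/
noncomputable def psComp (f g : PowerSeries ℚ) : PowerSeries ℚ :=
  PowerSeries.mk fun n =>
    ∑ m ∈ Finset.range (n + 1),
      PowerSeries.coeff m f * PowerSeries.coeff n (g ^ m)

/-- `(1+t)^x := exp (x · log(1+t))` as a formal power series over `ℚ`. -/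
noncomputable def onePlusPow (x : ℚ) : PowerSeries ℚ :=
  psComp (PowerSeries.exp ℚ) (x • logOneAdd)

/-- The falling factorial `(x)_n = x (x-1) ⋯ (x-n+1)`. -/
def fallFact (x : ℚ) (n : ℕ) : ℚ := ∏ i ∈ Finset.range n, (x - (i : ℚ))

open PowerSeries Finset

theorem logOneAdd_eq_log : logOneAdd = log ℚ := by
  ext n
  simp [logOneAdd]

theorem psComp_eq_subst (f : ℚ⟦X⟧) {g : ℚ⟦X⟧} (hg : constantCoeff g = 0) :
    psComp f g = f.subst g := by
  ext n
  rw [psComp, coeff_mk, coeff_subst' (HasSubst.of_constantCoeff_zero' hg),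
    finsum_eq_sum_of_support_subset _ (s := range (n + 1))]
  · rfl
  intro m hm
  by_contra h
  rw [coe_range, Set.mem_Iio, not_lt] at h
  have hzero : coeff n (g ^ m) = 0 := coeff_of_lt_order n
    ((Nat.cast_lt.mpr h).trans_le (le_order_pow_of_constantCoeff_eq_zero m hg))
  exact hm (by simp [hzero])

theorem one_add_X_mul_derivative_log (A : Type*) [CommRing A] [Algebra ℚ A] :
    (1 + X) * d⁄dX A (log A) = 1 := by
  ext n
  rw [deriv_log, add_mul, one_mul, map_add]
  rcases n with _ | n
  · simp
  · rw [coeff_succ_X_mul]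
    simp [pow_succ]

theorem constantCoeff_exp_subst_log (A : Type*) [CommRing A] [Algebra ℚ A] :
    constantCoeff ((exp A).subst (log A) : A⟦X⟧) = 1 := by
  have h : constantCoeff ((exp A - C 1).subst (log A) : A⟦X⟧) = 0 :=
    constantCoeff_subst_eq_zero constantCoeff_log _ (by simp [constantCoeff_exp])
  rwa [subst_sub HasSubst.log, subst_C, map_sub, sub_eq_zero] at h

theorem exp_subst_log (K : Type*) [Field K] [Algebra ℚ K] :
    (exp K).subst (log K) = (1 + X : K⟦X⟧) := by
  have : CharZero K := charZero_of_injective_algebraMap (algebraMap ℚ K).injective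
  set F : K⟦X⟧ := (exp K).subst (log K)
  set u : K⟦X⟧ := 1 + X
  have hu : u * u⁻¹ = 1 := PowerSeries.mul_inv_cancel u (by simp [u])
  have hF : u * d⁄dX K F = F := by
    rw [derivative_subst HasSubst.log, derivative_exp, mul_left_comm,
      one_add_X_mul_derivative_log, mul_one]
  have hFu : F * u⁻¹ = 1 := by
    apply derivative.ext
    · have hdu : d⁄dX K u = 1 := by simp [u]
      rw [derivative_one, Derivation.leibniz, derivative_inv', hdu, smul_eq_mul, smul_eq_mul]
      nth_rewrite 1 [← hF]
      linear_combination (-(d⁄dX K F * u⁻¹)) * hu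
    · rw [map_mul, constantCoeff_exp_subst_log]
      simp [u]
  calc F = F * u⁻¹ * u := by rw [mul_assoc, mul_comm u⁻¹, hu, mul_one]
    _ = u := by rw [hFu, one_mul]

theorem onePlusPow_eq_expMul_subst_log (x : ℚ) : onePlusPow x = (expMul x).subst (log ℚ) := by
  have hexpMul : expMul x = (exp ℚ).subst (x • X : ℚ⟦X⟧) := by
    rw [← rescale_eq_subst]
    ext n
    simp [expMul, coeff_rescale, div_eq_mul_inv]
  rw [onePlusPow, psComp_eq_subst _ (by simp [logOneAdd_eq_log]), hexpMul,
    subst_comp_subst_apply (HasSubst.smul_X' x) HasSubst.log, subst_smul HasSubst.log,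
    subst_X HasSubst.log, logOneAdd_eq_log]

theorem psComp_egf_of_pow_eq_egf (a : ℕ → ℚ) {g : ℚ⟦X⟧} (S : ℕ → ℕ → ℚ)
    (hS : ∀ m, g ^ m = (m.factorial : ℚ) • mk fun k => S k m / (k.factorial : ℚ)) :
    psComp (mk fun k => a k / (k.factorial : ℚ)) g =
      mk fun n => (∑ m ∈ range (n + 1), a m * S n m) / (n.factorial : ℚ) := by
  ext n
  rw [psComp, coeff_mk, coeff_mk, sum_div]
  refine sum_congr rfl fun m _ => ?_
  rw [coeff_mk, hS m, map_smul, smul_eq_mul, coeff_mk]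
  field_simp

theorem BE_log_substitution_series_general
    (r s : ℕ) (x : ℚ)
    (BE : ℕ → ℚ) (S1 : ℕ → ℕ → ℚ)
    (hBE : (2 : PowerSeries ℚ) ^ s * PowerSeries.X ^ r * expMul x =
      (PowerSeries.exp ℚ + 1) ^ s * (PowerSeries.exp ℚ - 1) ^ r * (PowerSeries.mk fun k => BE k / (k.factorial : ℚ)))
    (hS1 : ∀ m, logOneAdd ^ m =
      (m.factorial : ℚ) • (PowerSeries.mk fun k => S1 k m / (k.factorial : ℚ))) :
    (2 : PowerSeries ℚ) ^ s * logOneAdd ^ r * onePlusPow x =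
      (PowerSeries.X + 2) ^ s * PowerSeries.X ^ r *
        (PowerSeries.mk fun n =>
          (∑ m ∈ Finset.range (n + 1), BE m * S1 n m) / (n.factorial : ℚ)) := by
  have h := congrArg (substAlgHom (R := ℚ) (HasSubst.log (A := ℚ))) hBE
  simp only [map_mul, map_pow, map_ofNat, map_add, map_sub, map_one, coe_substAlgHom,
    subst_X HasSubst.log, exp_subst_log] at h
  rw [← psComp_egf_of_pow_eq_egf BE S1 hS1, psComp_eq_subst _ (by simp [logOneAdd_eq_log]),
    onePlusPow_eq_expMul_subst_log, logOneAdd_eq_log]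
  convert h using 3 <;> ring

theorem BE_log_substitution_series
    (r s : ℕ) (hr : 1 ≤ r) (hs : 1 ≤ s) (x : ℚ)
    (BE : ℕ → ℚ) (S1 : ℕ → ℕ → ℚ)
    (hBE : (2 : PowerSeries ℚ) ^ s * PowerSeries.X ^ r * expMul x =
      (PowerSeries.exp ℚ + 1) ^ s * (PowerSeries.exp ℚ - 1) ^ r * (PowerSeries.mk fun k => BE k / (k.factorial : ℚ)))
    (hS1 : ∀ m, logOneAdd ^ m =
      (m.factorial : ℚ) • (PowerSeries.mk fun k => S1 k m / (k.factorial : ℚ))) :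
    (2 : PowerSeries ℚ) ^ s * logOneAdd ^ r * onePlusPow x =
      (PowerSeries.X + 2) ^ s * PowerSeries.X ^ r *
        (PowerSeries.mk fun n =>
          (∑ m ∈ Finset.range (n + 1), BE m * S1 n m) / (n.factorial : ℚ)) :=
  BE_log_substitution_series_general r s x BE S1 hBE hS1
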